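/- Let V be an m-dimensional vector space over k and let φ : V → V be an additive map satisfying φ(c·v) = c^p·φ(v) for all c ∈ k and v ∈ V (i.e. φ is semilinear with respect to the Frobenius endomorphism of k). Then there exist elements x_1, …, x_d, y_1, …, y_s of V and positive integers n_1, …, n_d with n_1 + … + n_d + s = m such that the family consisting of φ^j(x_i) for 1 ≤ i ≤ d, 0 ≤ j ≤ n_i − 1, together with y_1, …, y_s, is a k-basis of V, and moreover φ^{n_i}(x_i) = 0 for each i and φ(y_j) = y_j for each j. -/

import Mathlib

set_option linter.unusedSectionVars false
set_option linter.unusedVariables false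
set_option maxHeartbeats 2000000

open Module Polynomial Submodule

section FrobeniusNormalForm

variable {p : ℕ} {k : Type} [Field k] [IsAlgClosed k] [CharP k p]
variable {V : Type} [AddCommGroup V] [Module k V]

lemma pthRoot_exists (hp : p.Prime) (c : k) : ∃ e : k, e ^ p = c :=
  IsAlgClosed.exists_pow_nat_eq c hp.pos

/-- kernel of a Frobenius-semilinear additive map, as a submodule -/
def sKer (φ : V →+ V) (hφ : ∀ (c : k) (v : V), φ (c • v) = c ^ p • φ v) : Submodule k V where
  carrier := {v | φ v = 0}
  add_mem' := fun ha hb => by simp_all [map_add]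
  zero_mem' := by simp
  smul_mem' := fun c v hv => by simp_all [hφ]

/-- range of a Frobenius-semilinear additive map, as a submodule (uses alg. closedness) -/
def sRange (hp : p.Prime) (φ : V →+ V) (hφ : ∀ (c : k) (v : V), φ (c • v) = c ^ p • φ v) :
    Submodule k V where
  carrier := Set.range φ
  add_mem' := by
    rintro a b ⟨a', rfl⟩ ⟨b', rfl⟩
    exact ⟨a' + b', by simp [map_add]⟩
  zero_mem' := ⟨0, map_zero φ⟩
  smul_mem' := by
    rintro c v ⟨u, rfl⟩
    obtain ⟨e, he⟩ := pthRoot_exists hp c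
    exact ⟨e • u, by rw [hφ, he]⟩

lemma mem_sKer {φ : V →+ V} {hφ : ∀ (c : k) (v : V), φ (c • v) = c ^ p • φ v} {v : V} :
    v ∈ sKer φ hφ ↔ φ v = 0 := Iff.rfl

lemma mem_sRange {hp : p.Prime} {φ : V →+ V} {hφ : ∀ (c : k) (v : V), φ (c • v) = c ^ p • φ v}
    {v : V} : v ∈ sRange hp φ hφ ↔ ∃ u, φ u = v := Iff.rfl

lemma exists_fixed_vector (hp : p.Prime) [FiniteDimensional k V] [Nontrivial V] (φ : V →+ V)
    (hφ : ∀ (c : k) (v : V), φ (c • v) = c ^ p • φ v)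
    (hinj : Function.Injective φ) :
    ∃ u : V, u ≠ 0 ∧ φ u = u := by
  classical
  obtain ⟨v, hv⟩ := exists_ne (0 : V)
  set g : ℕ → V := fun j => (⇑φ)^[j] v with hgdef
  have hgsucc : ∀ i, φ (g i) = g (i + 1) := fun i =>
    (Function.iterate_succ_apply' φ i v).symm
  have hdep : ∃ j, ¬ LinearIndependent k (fun i : Fin (j+1) => g i) := by
    refine ⟨finrank k V, fun h => ?_⟩
    have := h.fintype_card_le_finrank
    simp at this
  have hsnoc : ∀ q : ℕ, (fun i : Fin (q+1) => g i) = Fin.snoc (fun i : Fin q => g i) (g q) := by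
    intro q; funext i
    induction i using Fin.lastCases with
    | last => simp
    | cast i => simp
  have hr1pos : Nat.find hdep ≠ 0 := by
    intro h0
    have := Nat.find_spec hdep
    rw [h0] at this
    apply this
    rw [hsnoc 0]
    rw [linearIndependent_fin_snoc]
    refine ⟨linearIndependent_empty_type, ?_⟩
    simpa [Set.range_eq_empty, hgdef] using hv
  obtain ⟨r, hr⟩ := Nat.exists_eq_succ_of_ne_zero hr1pos
  have hind : LinearIndependent k (fun i : Fin (r+1) => g i) := by
    by_contra hc
    exact Nat.find_min hdep (by omega) hc
  have hdep2 : ¬ LinearIndependent k (fun i : Fin (r+2) => g i) := by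
    have := Nat.find_spec hdep
    rwa [hr] at this
  have hmem : g (r+1) ∈ span k (Set.range (fun i : Fin (r+1) => g i)) := by
    by_contra hmem
    exact hdep2 (by rw [hsnoc (r+1)]; exact linearIndependent_fin_snoc.mpr ⟨hind, hmem⟩)
  obtain ⟨aF, haF⟩ := (mem_span_range_iff_exists_fun k).mp hmem
  set a' : ℕ → k := fun i => if h : i < r+1 then aF ⟨i, h⟩ else 0 with ha'def
  have ha : ∑ i ∈ Finset.range (r+1), a' i • g i = g (r+1) := by
    rw [← Fin.sum_univ_eq_sum_range, ← haF]
    apply Finset.sum_congr rfl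
    intro i _
    simp [ha'def, i.isLt, Nat.not_lt.mpr (Nat.lt_succ_iff.mp i.isLt)]
  have ha0 : a' 0 ≠ 0 := by
    intro h0
    choose e he using fun i => pthRoot_exists hp (a' (i+1))
    have key : φ (g r) = φ (∑ i ∈ Finset.range r, e i • g i) := by
      rw [map_sum, hgsucc, ← ha, Finset.sum_range_succ']
      simp only [h0, zero_smul, add_zero]
      apply Finset.sum_congr rfl
      intro i _
      rw [hφ, he, hgsucc]
    have hmem2 : g r ∈ span k (Set.range (fun i : Fin r => g i)) := by
      rw [hinj key, ← Fin.sum_univ_eq_sum_range (fun i => e i • g i) r]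
      apply Submodule.sum_mem
      intro i _
      exact Submodule.smul_mem _ _ (Submodule.subset_span ⟨i, rfl⟩)
    rw [hsnoc r] at hind
    exact (linearIndependent_fin_snoc.mp hind).2 hmem2
  -- the additive polynomial
  set P : ℕ → k[X] :=
    fun i => Nat.rec (C (a' 0) * X ^ p) (fun i Pi => Pi ^ p + C (a' (i+1)) * X ^ p) i with hPdef
  have hP0 : P 0 = C (a' 0) * X ^ p := rfl
  have hPsucc : ∀ i, P (i+1) = P i ^ p + C (a' (i+1)) * X ^ p := fun i => rfl
  have hdeg : ∀ i, (P i).natDegree = p ^ (i+1) := by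
    intro i; induction i with
    | zero => rw [hP0, natDegree_C_mul ha0, natDegree_X_pow, pow_one]
    | succ i ih =>
      rw [hPsucc, natDegree_add_eq_left_of_natDegree_lt, natDegree_pow, ih]
      · ring
      rw [natDegree_pow, ih]
      calc (C (a' (i+1)) * X ^ p).natDegree ≤ (X ^ p : k[X]).natDegree := natDegree_C_mul_le _ _
        _ = p := natDegree_X_pow p
        _ < p ^ (i + 1 + 1) := by
            calc p = p ^ 1 := (pow_one p).symm
              _ < p ^ (i+2) := Nat.pow_lt_pow_right hp.one_lt (by omega)
        _ = p * p ^ (i + 1) := by ring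
  have hder : ∀ i, derivative (P i) = 0 := by
    intro i; induction i with
    | zero => simp [hP0, derivative_X_pow, CharP.cast_eq_zero k p]
    | succ i ih => simp [hPsucc, derivative_pow, ih, derivative_X_pow, CharP.cast_eq_zero k p]
  set Q : k[X] := P r - X with hQdef
  have hQdeg : Q.natDegree = p ^ (r+1) := by
    rw [hQdef, sub_eq_add_neg, natDegree_add_eq_left_of_natDegree_lt, hdeg]
    rw [hdeg, natDegree_neg, natDegree_X]
    calc 1 < p := hp.one_lt
      _ = p ^ 1 := (pow_one p).symm
      _ ≤ p ^ (r+1) := Nat.pow_le_pow_right hp.pos (by omega)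
  have hQder : derivative Q = -1 := by
    rw [hQdef, derivative_sub, hder, derivative_X, zero_sub]
  have hQsep : Q.Separable := by
    rw [Polynomial.Separable, hQder]
    exact ⟨0, -1, by ring⟩
  have hcard : Fintype.card (Q.rootSet k) = p ^ (r+1) := by
    rw [card_rootSet_eq_natDegree hQsep (IsAlgClosed.splits _), hQdeg]
  obtain ⟨t, htroot, htne⟩ : ∃ t : k, t ∈ Q.rootSet k ∧ t ≠ 0 := by
    obtain ⟨t1, t2, hne⟩ := Fintype.exists_pair_of_one_lt_card (α := Q.rootSet k)
      (by rw [hcard]; calc 1 < p := hp.one_lt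
            _ = p ^ 1 := (pow_one p).symm
            _ ≤ p ^ (r+1) := Nat.pow_le_pow_right hp.pos (by omega))
    by_cases h1 : (t1 : k) = 0
    · exact ⟨t2, t2.2, fun h2 => hne (Subtype.ext (by rw [h1, h2]))⟩
    · exact ⟨t1, t1.2, h1⟩
  have heval : (P r).eval t = t := by
    have h2 := (Polynomial.mem_rootSet.mp htroot).2
    rw [coe_aeval_eq_eval] at h2
    rw [hQdef, eval_sub, eval_X, sub_eq_zero] at h2
    exact h2
  set b : ℕ → k := fun i => (P i).eval t with hbdef
  have hb0 : b 0 = a' 0 * t ^ p := by simp [hbdef, hP0]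
  have hbs : ∀ i, b (i+1) = b i ^ p + a' (i+1) * t ^ p := by
    intro i; simp [hbdef, hPsucc i]
  have hbr : b r = t := heval
  refine ⟨∑ i ∈ Finset.range (r+1), b i • g i, ?_, ?_⟩
  · intro h0
    rw [← Fin.sum_univ_eq_sum_range (fun i => b i • g i) (r+1)] at h0
    have := Fintype.linearIndependent_iff.mp hind (fun i => b i.1) h0 ⟨r, by omega⟩
    rw [hbr] at this
    exact htne this
  · have step1 : φ (∑ i ∈ Finset.range (r+1), b i • g i)
        = ∑ i ∈ Finset.range (r+1), b i ^ p • g (i+1) := by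
      rw [map_sum]
      apply Finset.sum_congr rfl
      intro i _
      rw [hφ, hgsucc]
    rw [step1, Finset.sum_range_succ, hbr, ← ha, Finset.smul_sum]
    have step2 : ∑ i ∈ Finset.range (r+1), t ^ p • (a' i • g i)
        = (∑ i ∈ Finset.range r, (a' (i+1) * t ^ p) • g (i+1)) + (a' 0 * t ^ p) • g 0 := by
      rw [Finset.sum_range_succ']
      congr 1
      · apply Finset.sum_congr rfl
        intro i _
        rw [smul_smul, mul_comm]
      · rw [smul_smul, mul_comm]
    rw [step2, ← add_assoc, ← Finset.sum_add_distrib]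
    have step3 : ∀ i ∈ Finset.range r,
        b i ^ p • g (i+1) + (a' (i+1) * t ^ p) • g (i+1) = b (i+1) • g (i+1) := by
      intro i _
      rw [← add_smul, ← hbs]
    rw [Finset.sum_congr rfl step3, ← hb0]
    exact (Finset.sum_range_succ' (fun i => b i • g i) r).symm

lemma artinschreier_exists (hp : p.Prime) (c : k) : ∃ e : k, e ^ p - e = c := by
  obtain ⟨e, he⟩ := IsAlgClosed.exists_root (p := X ^ p - X - C c) (by
    intro hdeg0
    have h1 : (X ^ p - X - C c : k[X]).natDegree = p := by
      rw [sub_sub, sub_eq_add_neg, natDegree_add_eq_left_of_natDegree_lt, natDegree_X_pow]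
      rw [natDegree_neg, natDegree_X_pow]
      calc (X + C c : k[X]).natDegree = 1 := natDegree_X_add_C c
        _ < p := hp.one_lt
    have h2 : (X ^ p - X - C c : k[X]).natDegree = 0 := natDegree_eq_of_degree_eq_some hdeg0
    have := hp.two_le
    omega)
  refine ⟨e, ?_⟩
  have := he
  simp only [IsRoot, eval_sub, eval_pow, eval_X, eval_C, sub_eq_zero] at this
  exact this

lemma surj_on_span_fixed (hp : p.Prime) (φ : V →+ V)
    (hφ : ∀ (c : k) (v : V), φ (c • v) = c ^ p • φ v) :
    ∀ u ∈ span k {v : V | φ v = v}, ∃ u' ∈ span k {v : V | φ v = v}, φ u' = u := by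
  intro u hu
  obtain ⟨N, f, gs, hsum⟩ := mem_span_set'.mp hu
  choose e he using fun i => pthRoot_exists hp (f i)
  refine ⟨∑ i, e i • (gs i : V), sum_mem fun i _ => smul_mem _ _ (subset_span (gs i).2), ?_⟩
  rw [map_sum, ← hsum]
  apply Finset.sum_congr rfl
  intro i _
  have hfix : φ (gs i : V) = (gs i : V) := (gs i).2
  rw [hφ, he, hfix]

lemma artinschreier_on_span_fixed (hp : p.Prime) (φ : V →+ V)
    (hφ : ∀ (c : k) (v : V), φ (c • v) = c ^ p • φ v) :
    ∀ u ∈ span k {v : V | φ v = v}, ∃ u' ∈ span k {v : V | φ v = v}, φ u' - u' = u := by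
  intro u hu
  obtain ⟨N, f, gs, hsum⟩ := mem_span_set'.mp hu
  choose e he using fun i => artinschreier_exists hp (f i)
  refine ⟨∑ i, e i • (gs i : V), sum_mem fun i _ => smul_mem _ _ (subset_span (gs i).2), ?_⟩
  rw [map_sum, ← hsum, ← Finset.sum_sub_distrib]
  apply Finset.sum_congr rfl
  intro i _
  have hfix : φ (gs i : V) = (gs i : V) := (gs i).2
  rw [hφ, hfix, ← sub_smul, he]


lemma span_fixed_eq_top (hp : p.Prime) [FiniteDimensional k V] (φ : V →+ V)
    (hφ : ∀ (c : k) (v : V), φ (c • v) = c ^ p • φ v)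
    (hinj : Function.Injective φ) :
    span k {v : V | φ v = v} = ⊤ := by
  by_contra hU
  set U := span k {v : V | φ v = v} with hUdef
  obtain ⟨Co, hC⟩ := Submodule.exists_isCompl U
  have hCne : Co ≠ ⊥ := by
    intro h
    rw [h] at hC
    exact hU (by simpa using hC.codisjoint.eq_top)
  haveI : Nontrivial Co := Submodule.nontrivial_iff_ne_bot.mpr hCne
  set π := Co.projectionOnto U hC.symm with hπdef
  set ψ : Co →+ Co :=
    { toFun := fun c => π (φ (c : V))
      map_zero' := by simp
      map_add' := by intro a b; simp [map_add] } with hψdef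
  have hψapp : ∀ c : Co, ψ c = π (φ (c : V)) := fun c => rfl
  have hψ : ∀ (a : k) (c : Co), ψ (a • c) = a ^ p • ψ c := by
    intro a c
    rw [hψapp, hψapp, Submodule.coe_smul, hφ, map_smul]
  have hψinj : Function.Injective ψ := by
    rw [injective_iff_map_eq_zero]
    intro c hc
    rw [hψapp] at hc
    have hmem : φ (c : V) ∈ U := (Submodule.linearProjOfIsCompl_apply_eq_zero_iff hC.symm).mp hc
    obtain ⟨u', hu'U, hu'⟩ := surj_on_span_fixed hp φ hφ _ hmem
    have : (c : V) = u' := (hinj hu').symm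
    have hcU : (c : V) ∈ U := this ▸ hu'U
    have := Submodule.disjoint_def.mp hC.disjoint _ hcU c.2
    exact Subtype.ext this
  obtain ⟨w, hw0, hwfix⟩ := exists_fixed_vector hp ψ hψ hψinj
  rw [hψapp] at hwfix
  have huU : φ (w : V) - (w : V) ∈ U := by
    have : π (φ (w : V) - (w : V)) = 0 := by
      rw [map_sub, hwfix, Submodule.projectionOnto_apply_left hC.symm, sub_self]
    exact (Submodule.projectionOnto_apply_eq_zero_iff hC.symm).mp this
  obtain ⟨u', hu'U, hu'⟩ := artinschreier_on_span_fixed hp φ hφ _ (neg_mem huU)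
  have hw' : φ ((w : V) + u') = (w : V) + u' := by
    rw [map_add]
    rw [sub_eq_iff_eq_add] at hu'
    rw [hu']
    abel
  have hw'U : (w : V) + u' ∈ U := subset_span hw'
  have hwU : (w : V) ∈ U := by
    have := U.sub_mem hw'U hu'U
    simpa using this
  have := Submodule.disjoint_def.mp hC.disjoint _ hwU w.2
  exact hw0 (Subtype.ext this)

lemma exists_fixed_basis (hp : p.Prime) [FiniteDimensional k V] (φ : V →+ V)
    (hφ : ∀ (c : k) (v : V), φ (c • v) = c ^ p • φ v)
    (hinj : Function.Injective φ) :
    ∃ y : Fin (finrank k V) → V, (∀ j, φ (y j) = y j) ∧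
      ∃ b : Basis (Fin (finrank k V)) k V, ⇑b = y := by
  classical
  obtain ⟨bset, hbsub, hbspan, hbli⟩ := exists_linearIndependent k {v : V | φ v = v}
  rw [span_fixed_eq_top hp φ hφ hinj] at hbspan
  haveI : Fintype bset := hbli.setFinite.fintype
  have htop : ⊤ ≤ span k (Set.range ((↑) : bset → V)) := by
    rw [Subtype.range_coe]
    exact le_of_eq hbspan.symm
  let B0 : Basis bset k V := Basis.mk hbli htop
  have hcard : Fintype.card bset = finrank k V := (Module.finrank_eq_card_basis B0).symm
  let e : bset ≃ Fin (finrank k V) := Fintype.equivFinOfCardEq hcard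
  refine ⟨⇑(B0.reindex e), ?_, ⟨B0.reindex e, rfl⟩⟩
  intro j
  rw [Basis.reindex_apply, Basis.mk_apply]
  exact hbsub (e.symm j).2


lemma finrank_eq_of_semilinear (hp : p.Prime) [FiniteDimensional k V] (φ : V →+ V)
    (hφ : ∀ (c : k) (v : V), φ (c • v) = c ^ p • φ v) (U U' : Submodule k V)
    (hmap : ∀ u ∈ U, φ u ∈ U')
    (hsurjU : ∀ w ∈ U', ∃ u ∈ U, φ u = w)
    (hinjU : ∀ u ∈ U, φ u = 0 → u = 0) :
    finrank k U = finrank k U' := by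
  classical
  let bU := finBasis k U
  set wfam : Fin (finrank k U) → U' := fun i => ⟨φ ((bU i : V)), hmap _ (bU i).2⟩ with hwfam
  have hli : LinearIndependent k wfam := by
    rw [Fintype.linearIndependent_iff]
    intro cc hcc
    choose e he using fun i => pthRoot_exists hp (cc i)
    have h0 : ((∑ i, cc i • wfam i : U') : V) = 0 := by rw [hcc]; rfl
    have h0' : ∑ i, cc i • φ ((bU i : V)) = 0 := by
      rw [← h0]
      simp [hwfam]
    have h1 : φ (∑ i, e i • ((bU i : V))) = 0 := by
      rw [map_sum, ← h0']
      apply Finset.sum_congr rfl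
      intro i _
      rw [hφ, he]
    have h2 : (∑ i, e i • ((bU i : V))) = 0 :=
      hinjU _ (sum_mem fun i _ => smul_mem _ _ (bU i).2) h1
    have h3 : (∑ i, e i • bU i : U) = 0 := by
      apply Subtype.ext
      simpa using h2
    have he0 := Fintype.linearIndependent_iff.mp bU.linearIndependent e h3
    intro i
    rw [← he i, he0 i, zero_pow hp.pos.ne']
  have hsp : ⊤ ≤ span k (Set.range wfam) := by
    rintro ⟨w', hw'⟩ -
    obtain ⟨u, huU, hu⟩ := hsurjU w' hw'
    rw [mem_span_range_iff_exists_fun]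
    refine ⟨fun i => (bU.repr ⟨u, huU⟩ i) ^ p, ?_⟩
    apply Subtype.ext
    have hrepr := bU.sum_repr ⟨u, huU⟩
    have hreprV : ∑ i, bU.repr ⟨u, huU⟩ i • (bU i : V) = u := by
      calc ∑ i, bU.repr ⟨u, huU⟩ i • (bU i : V)
          = ((∑ i, bU.repr ⟨u, huU⟩ i • bU i : U) : V) := by simp only [Submodule.coe_sum, Submodule.coe_smul]
        _ = u := by rw [hrepr]
    calc ((∑ i, bU.repr ⟨u, huU⟩ i ^ p • wfam i : U') : V)
        = ∑ i, bU.repr ⟨u, huU⟩ i ^ p • φ ((bU i : V)) := by simp [hwfam]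
      _ = ∑ i, φ (bU.repr ⟨u, huU⟩ i • (bU i : V)) := by
          apply Finset.sum_congr rfl
          intro i _
          rw [hφ]
      _ = φ u := by rw [← map_sum, hreprV]
      _ = ((⟨w', hw'⟩ : U') : V) := hu
  have hB' := Module.finrank_eq_card_basis (Basis.mk hli hsp)
  rw [hB', Fintype.card_fin]

def NormalForm (p : ℕ) (k : Type) [Field k] (V : Type) [AddCommGroup V] [Module k V]
    (φ : V →+ V) (m : ℕ) : Prop :=
  ∃ (d s : ℕ) (n : Fin d → ℕ) (x : Fin d → V) (y : Fin s → V),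
    (∀ i, 0 < n i) ∧ (∑ i, n i) + s = m ∧
    (∀ i, (⇑φ)^[n i] (x i) = 0) ∧ (∀ j, φ (y j) = y j) ∧
    ∃ b : Basis ((Σ i : Fin d, Fin (n i)) ⊕ Fin s) k V,
      (∀ (i : Fin d) (j : Fin (n i)), b (Sum.inl ⟨i, j⟩) = (⇑φ)^[(j : ℕ)] (x i)) ∧
      (∀ j : Fin s, b (Sum.inr j) = y j)

lemma main_aux (hp : p.Prime) (m : ℕ) :
    ∀ (V : Type) [AddCommGroup V] [Module k V] [FiniteDimensional k V]
      (φ : V →+ V), (∀ (c : k) (v : V), φ (c • v) = c ^ p • φ v) →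
      finrank k V = m → NormalForm p k V φ m := by
  induction m using Nat.strong_induction_on with
  | _ m IH =>
  intro V _ _ _ φ hφ hm
  by_cases hker : ∀ v : V, φ v = 0 → v = 0
  · -- φ is injective : basis of fixed vectors
    have hinj : Function.Injective ⇑φ := (injective_iff_map_eq_zero φ).mpr hker
    obtain ⟨y, hyfix, B, hB⟩ := exists_fixed_basis hp φ hφ hinj
    subst hm
    unfold NormalForm
    haveI : IsEmpty ((i : Fin 0) × Fin (Fin.elim0 i)) := ⟨fun x => x.1.elim0⟩
    refine ⟨0, finrank k V, Fin.elim0, Fin.elim0, y, fun i => i.elim0, by simp,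
      fun i => i.elim0, hyfix, B.reindex (Equiv.emptySum _ _).symm, fun i => i.elim0, ?_⟩
    intro j
    rw [Basis.reindex_apply, Equiv.symm_symm, Equiv.emptySum_apply_inr, ← hB]

  · -- non-injective case
    push_neg at hker
    obtain ⟨v0, hv0z, hv0⟩ := hker
    set K := sKer φ hφ with hKdef
    set W := sRange hp φ hφ with hWdef
    haveI : Nontrivial K := by
      refine Submodule.nontrivial_iff_ne_bot.mpr ?_
      intro hbot
      have hmem : v0 ∈ K := hv0z
      rw [hbot] at hmem
      exact hv0 (by simpa using hmem)
    obtain ⟨C, hC⟩ := Submodule.exists_isCompl K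
    have hrankC : finrank k C = finrank k W := by
      apply finrank_eq_of_semilinear hp φ hφ
      · intro u _
        exact ⟨u, rfl⟩
      · rintro w ⟨u, rfl⟩
        have husup : u ∈ K ⊔ C := by rw [hC.codisjoint.eq_top]; trivial
        obtain ⟨uk, huk, uc, huc, rfl⟩ := Submodule.mem_sup.mp husup
        refine ⟨uc, huc, ?_⟩
        rw [map_add, huk, zero_add]
      · intro u huC hu0
        exact Submodule.disjoint_def.mp hC.disjoint u hu0 huC
    have hrn : finrank k K + finrank k W = m := by
      rw [← hrankC, ← hm]
      exact Submodule.finrank_add_eq_of_isCompl hC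
    have hKpos : 0 < finrank k K := finrank_pos
    have hWlt : finrank k W < m := by omega
    set φW : W →+ W :=
      { toFun := fun w => ⟨φ (w : V), ⟨(w : V), rfl⟩⟩
        map_zero' := by apply Subtype.ext; simp
        map_add' := by intro a b; apply Subtype.ext; simp } with hφWdef
    have hφWapp : ∀ w : W, (φW w : V) = φ (w : V) := fun w => rfl
    have hφW : ∀ (c : k) (w : W), φW (c • w) = c ^ p • φW w := by
      intro c w
      apply Subtype.ext
      rw [hφWapp, Submodule.coe_smul, Submodule.coe_smul, hφ, hφWapp]
    have hNF := IH (finrank k W) hWlt W φW hφW rfl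
    unfold NormalForm at hNF
    obtain ⟨d, s, n, xb, yb, hn, hsum, hnil, hfix, bW, hbW1, hbW2⟩ := hNF
    have hiter : ∀ (j : ℕ) (w : W), (((⇑φW)^[j] w : W) : V) = (⇑φ)^[j] (w : V) := by
      intro j
      induction j with
      | zero => intro w; rfl
      | succ j ih =>
        intro w
        rw [Function.iterate_succ_apply, Function.iterate_succ_apply, ih, hφWapp]
    choose x hx using fun i => (xb i).2
    have hchain : ∀ (i : Fin d) (j : ℕ), (⇑φ)^[j+1] (x i) = (((⇑φW)^[j] (xb i) : W) : V) := by
      intro i j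
      rw [Function.iterate_succ_apply, hx, hiter]
    set ee : Fin d → V := fun i => (⇑φ)^[n i] (x i) with heedef
    have heeW : ∀ i, ee i
        = (bW (Sum.inl ⟨i, ⟨n i - 1, Nat.sub_lt (hn i) one_pos⟩⟩) : V) := by
      intro i
      have h2 := congrArg (Subtype.val) (hbW1 i ⟨n i - 1, Nat.sub_lt (hn i) one_pos⟩)
      rw [h2, ← hchain i (n i - 1)]
      show (⇑φ)^[n i] (x i) = _
      congr 1
      have := hn i
      omega
    have heK : ∀ i, ee i ∈ K := by
      intro i
      show φ (ee i) = 0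
      show φ ((⇑φ)^[n i] (x i)) = 0
      rw [← Function.iterate_succ_apply' (⇑φ) (n i) (x i), Function.iterate_succ_apply, hx,
        ← hiter, hnil i]
      rfl
    set eK : Fin d → K := fun i => ⟨ee i, heK i⟩ with heKdef
    have heeli : LinearIndependent k ee := by
      have h1 : LinearIndependent k (fun ι => (bW ι : V)) :=
        bW.linearIndependent.map' W.subtype (Submodule.ker_subtype W)
      have h2 := h1.comp
        (fun i : Fin d =>
          (Sum.inl ⟨i, ⟨n i - 1, Nat.sub_lt (hn i) one_pos⟩⟩ : (Σ i : Fin d, Fin (n i)) ⊕ Fin s))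
        (by
          intro i1 i2 h
          have := Sum.inl_injective h
          exact (Sigma.mk.inj_iff.mp this).1)
      rw [show ee = _ from funext heeW]
      exact h2
    have heKli : LinearIndependent k eK := by
      apply LinearIndependent.of_comp K.subtype
      exact heeli
    obtain ⟨C', hC'⟩ := Submodule.exists_isCompl (span k (Set.range eK))
    set t := finrank k C' with htdef
    have hdt : d + t = finrank k K := by
      rw [← Submodule.finrank_add_eq_of_isCompl hC', finrank_span_eq_card heKli,
        Fintype.card_fin]
    set zC : Basis (Fin t) k C' := finBasis k C' with hzCdef
    set z : Fin t → V := fun r => (((zC r : C') : K) : V) with hzdef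
    have hzK : ∀ r, z r ∈ K := fun r => ((zC r : C') : K).2
    have hz0 : ∀ r, φ (z r) = 0 := fun r => hzK r
    -- final data
    set n' : Fin (d + t) → ℕ := Fin.append (fun i => n i + 1) (fun _ => 1) with hn'def
    set x' : Fin (d + t) → V := Fin.append x z with hx'def
    set y : Fin s → V := fun j => (yb j : V) with hydef
    set F : ((Σ i : Fin (d + t), Fin (n' i)) ⊕ Fin s) → V :=
      Sum.elim (fun q => (⇑φ)^[(q.2 : ℕ)] (x' q.1)) y with hFdef
    have h0n : ∀ i, 0 < n' i := by
      intro i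
      induction i using Fin.addCases with
      | left i => simp [hn'def, Fin.append_left]
      | right i => simp [hn'def, Fin.append_right]
    have hnil' : ∀ i, (⇑φ)^[n' i] (x' i) = 0 := by
      intro i
      induction i using Fin.addCases with
      | left i =>
        rw [hn'def, hx'def]
        simp only [Fin.append_left]
        rw [Function.iterate_succ_apply']
        exact heK i
      | right i =>
        rw [hn'def, hx'def]
        simp only [Fin.append_right]
        exact hz0 i
    have hyfix : ∀ j, φ (y j) = y j := by
      intro j
      rw [hydef]
      show (φW (yb j) : V) = (yb j : V)
      rw [hfix j]
    -- membership of chain ends and z in range F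
    have heeF : ∀ i : Fin d, ee i ∈ Set.range F := by
      intro i
      refine ⟨Sum.inl ⟨Fin.castAdd t i, ⟨n i, ?_⟩⟩, ?_⟩
      · rw [hn'def, Fin.append_left]
        omega
      · show (⇑φ)^[n i] (x' (Fin.castAdd t i)) = ee i
        rw [hx'def, Fin.append_left]
    have hzF : ∀ r : Fin t, z r ∈ Set.range F := by
      intro r
      refine ⟨Sum.inl ⟨Fin.natAdd d r, ⟨0, h0n _⟩⟩, ?_⟩
      show (⇑φ)^[0] (x' (Fin.natAdd d r)) = z r
      rw [hx'def, Fin.append_right]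
      rfl
    -- K is contained in the span of F
    have hKspan : (K : Submodule k V) ≤ span k (Set.range F) := by
      intro κ hκ
      have hκ' : (⟨κ, hκ⟩ : K) ∈ span k (Set.range eK) ⊔ C' := by
        rw [hC'.codisjoint.eq_top]; trivial
      obtain ⟨aa, haa, bb, hbb, hab⟩ := Submodule.mem_sup.mp hκ'
      have haaV : (aa : V) ∈ span k (Set.range ee) := by
        have h1 : K.subtype aa ∈ Submodule.map K.subtype (span k (Set.range eK)) :=
          Submodule.mem_map_of_mem haa
        rw [Submodule.map_span, ← Set.range_comp] at h1
        exact h1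
      have hbbV : (bb : V) ∈ span k (Set.range z) := by
        have h0 : (⟨bb, hbb⟩ : C') ∈ span k (Set.range zC) := by
          rw [zC.span_eq]; trivial
        have h1 : C'.subtype ⟨bb, hbb⟩ ∈ Submodule.map C'.subtype (span k (Set.range zC)) :=
          Submodule.mem_map_of_mem h0
        rw [Submodule.map_span, ← Set.range_comp] at h1
        have h2 : K.subtype bb ∈ Submodule.map K.subtype (span k (Set.range (⇑C'.subtype ∘ zC))) :=
          Submodule.mem_map_of_mem h1
        rw [Submodule.map_span, ← Set.range_comp] at h2
        exact h2
      have hκV : κ = (aa : V) + (bb : V) := by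
        have h3 := congrArg Subtype.val hab
        simpa using h3.symm
      rw [hκV]
      apply Submodule.add_mem
      · exact span_le.mpr ((Set.range_subset_iff.mpr heeF).trans subset_span) haaV
      · exact span_le.mpr ((Set.range_subset_iff.mpr hzF).trans subset_span) hbbV
    -- spanning
    have hspan : ⊤ ≤ span k (Set.range F) := by
      intro v _
      set wv : W := ⟨φ v, ⟨v, rfl⟩⟩ with hwvdef
      set G : ((Σ i : Fin d, Fin (n i)) ⊕ Fin s) → V :=
        Sum.elim (fun q => (⇑φ)^[(q.2 : ℕ)] (x q.1)) y with hGdef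
      have hGF : ∀ ι, G ι ∈ Set.range F := by
        rintro (⟨i, j⟩ | j)
        · refine ⟨Sum.inl ⟨Fin.castAdd t i, ⟨(j : ℕ), ?_⟩⟩, ?_⟩
          · rw [hn'def, Fin.append_left]
            omega
          · show (⇑φ)^[(j : ℕ)] (x' (Fin.castAdd t i)) = G (Sum.inl ⟨i, j⟩)
            rw [hx'def, Fin.append_left]
            rfl
        · exact ⟨Sum.inr j, rfl⟩
      have hbWG : ∀ ι, (bW ι : V) = φ (G ι) := by
        rintro (⟨i, j⟩ | j)
        · rw [congrArg Subtype.val (hbW1 i j), hiter]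
          show (⇑φ)^[(j : ℕ)] ((xb i : W) : V) = φ ((⇑φ)^[(j : ℕ)] (x i))
          rw [← hx i, ← Function.iterate_succ_apply, Function.iterate_succ_apply']
        · rw [congrArg Subtype.val (hbW2 j)]
          exact (hyfix j).symm
      choose rc hrc using fun ι => pthRoot_exists hp (bW.repr wv ι)
      set u : V := ∑ ι, rc ι • G ι with hudef
      have huspan : u ∈ span k (Set.range F) :=
        Submodule.sum_mem _ fun ι _ => Submodule.smul_mem _ _ (subset_span (hGF ι))
      have hvu : v - u ∈ K := by
        show φ (v - u) = 0
        rw [map_sub, hudef, map_sum]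
        have hkey : ∑ ι, φ (rc ι • G ι) = φ v := by
          calc ∑ ι, φ (rc ι • G ι) = ∑ ι, bW.repr wv ι • (bW ι : V) := by
                apply Finset.sum_congr rfl
                intro ι _
                rw [hφ, hrc, hbWG]
            _ = ((∑ ι, bW.repr wv ι • bW ι : W) : V) := by simp only [Submodule.coe_sum, Submodule.coe_smul]
            _ = (wv : V) := by rw [bW.sum_repr wv]
            _ = φ v := rfl
        rw [hkey, sub_self]
      have hveq : v = (v - u) + u := (sub_add_cancel v u).symm
      rw [hveq]
      exact Submodule.add_mem _ (hKspan hvu) huspan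
    -- counting
    have hsum' : (∑ i, n' i) + s = m := by
      rw [hn'def, Fin.sum_univ_add]
      simp only [Fin.append_left, Fin.append_right, Finset.sum_add_distrib,
        Finset.sum_const, Finset.card_univ, Fintype.card_fin, smul_eq_mul, mul_one]
      omega
    have hcard : Fintype.card ((Σ i : Fin (d + t), Fin (n' i)) ⊕ Fin s) = finrank k V := by
      rw [Fintype.card_sum, Fintype.card_sigma, Fintype.card_fin]
      simp only [Fintype.card_fin]
      omega
    set bb := basisOfTopLeSpanOfCardEqFinrank F hspan hcard with hbbdef
    have hbbF : ⇑bb = F := coe_basisOfTopLeSpanOfCardEqFinrank F hspan hcard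
    unfold NormalForm
    refine ⟨d + t, s, n', x', y, h0n, hsum', hnil', hyfix, bb, ?_, ?_⟩
    · intro i j
      rw [hbbF]
      rfl
    · intro j
      rw [hbbF]
      rfl


end FrobeniusNormalForm

/-- Let `V` be an `m`-dimensional vector space over `k` and `φ : V → V` an additive map with
`φ(c·v) = c^p·φ(v)` (Frobenius-semilinear). Then there are `x_1, …, x_d, y_1, …, y_s ∈ V`
and positive integers `n_1, …, n_d` with `n_1 + … + n_d + s = m` such that the family of
the `φ^j(x_i)` (`0 ≤ j ≤ n_i − 1`) together with the `y_j` is a `k`-basis of `V`, with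
`φ^{n_i}(x_i) = 0` for each `i` and `φ(y_j) = y_j` for each `j`. -/
theorem frobenius_semilinear_normal_form
    (p : ℕ) (hp : p.Prime) (k : Type) [Field k] [IsAlgClosed k] [CharP k p]
    (V : Type) [AddCommGroup V] [Module k V] [FiniteDimensional k V] (m : ℕ)
    (hdim : Module.finrank k V = m)
    (φ : V →+ V) (hφ : ∀ (c : k) (v : V), φ (c • v) = c ^ p • φ v) :
    ∃ (d s : ℕ) (n : Fin d → ℕ) (x : Fin d → V) (y : Fin s → V),
      (∀ i, 0 < n i) ∧ (∑ i, n i) + s = m ∧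
      (∀ i, (⇑φ)^[n i] (x i) = 0) ∧ (∀ j, φ (y j) = y j) ∧
      ∃ b : Basis ((Σ i : Fin d, Fin (n i)) ⊕ Fin s) k V,
        (∀ (i : Fin d) (j : Fin (n i)), b (Sum.inl ⟨i, j⟩) = (⇑φ)^[(j : ℕ)] (x i)) ∧
        (∀ j : Fin s, b (Sum.inr j) = y j) := by
  have h := main_aux hp m V φ hφ hdim
  unfold NormalForm at h
  exact h
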